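/- arXiv:math/0508260 — 3 statements merged into one kernel-verified Lean document; each statement's English description precedes it below -/
import Mathlib

section
/- Let A be an n×n exchange matrix, n ≥ 1 (a real matrix with nonnegative entries each of whose column sums equals 1). Then the equation Ap = p has a nontrivial solution with nonnegative entries: there exists p ∈ ℝⁿ with p ≠ 0, pᵢ ≥ 0 for every i, and Ap = p. -/
/-!
A column-stochastic matrix maps the standard simplex, a compact convex set, into itself, and a
continuous linear map preserving a nonempty compact convex set `K` has a fixed point in `K`
(the one-map case of Markov–Kakutani): the Cesàro averages of an orbit stay in `K` by convexity,
and telescoping shows that `f` moves the `N`-th average by `(f^[N+1] x - x) / (N + 1) → 0`,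
so any cluster point of the averages is fixed. A point of the simplex is nonzero.
-/

open Filter Topology Set Bornology

section OrbitAverage

variable {E : Type*}

noncomputable def orbitAverage [AddCommMonoid E] [Module ℝ E] (f : E → E) (x : E) (N : ℕ) : E :=
  ∑ k ∈ Finset.range (N + 1), ((N : ℝ) + 1)⁻¹ • f^[k] x

lemma orbitAverage_mem [AddCommGroup E] [Module ℝ E] {K : Set E} {f : E → E} {x : E}
    (hK : Convex ℝ K) (hf : MapsTo f K K) (hx : x ∈ K) (N : ℕ) : orbitAverage f x N ∈ K := by
  refine hK.sum_mem (fun _ _ => by positivity) ?_ fun k _ => hf.iterate k hx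
  rw [Finset.sum_const, Finset.card_range, nsmul_eq_mul]
  push_cast
  exact mul_inv_cancel₀ (by positivity)

lemma map_orbitAverage_sub [AddCommGroup E] [Module ℝ E] (f : E →ₗ[ℝ] E) (x : E) (N : ℕ) :
    f (orbitAverage f x N) - orbitAverage f x N = ((N : ℝ) + 1)⁻¹ • (f^[N + 1] x - x) := by
  simp only [orbitAverage, map_sum, map_smul, ← Finset.sum_sub_distrib, ← smul_sub]
  rw [← Finset.smul_sum]
  congr 1
  simpa only [Function.iterate_succ_apply', Function.iterate_zero_apply] using
    Finset.sum_range_sub (fun k => (⇑f)^[k] x) (N + 1)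

lemma tendsto_map_orbitAverage_sub [NormedAddCommGroup E] [NormedSpace ℝ E] {K : Set E}
    (f : E →ₗ[ℝ] E) (hK : IsBounded K) (hf : MapsTo f K K) {x : E} (hx : x ∈ K) :
    Tendsto (fun N => f (orbitAverage f x N) - orbitAverage f x N) atTop (𝓝 0) := by
  simp only [map_orbitAverage_sub]
  refine Tendsto.zero_smul_isBoundedUnder_le ?_ ?_
  · exact tendsto_one_div_add_atTop_nhds_zero_nat.congr fun N => one_div _
  · obtain ⟨C, hC⟩ := hK.exists_norm_le
    refine isBoundedUnder_of ⟨C + C, fun N => ?_⟩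
    exact (norm_sub_le _ _).trans (add_le_add (hC _ (hf.iterate _ hx)) (hC _ hx))

theorem ContinuousLinearMap.exists_fixedPoint_of_mapsTo [NormedAddCommGroup E] [NormedSpace ℝ E]
    {K : Set E} (f : E →L[ℝ] E) (hK : IsCompact K) (hKc : Convex ℝ K) (hne : K.Nonempty)
    (hf : MapsTo f K K) : ∃ p ∈ K, f p = p := by
  obtain ⟨x, hx⟩ := hne
  obtain ⟨p, hpK, φ, hφ, hlim⟩ := hK.tendsto_subseq (orbitAverage_mem hKc hf hx)
  have hdefect := (tendsto_map_orbitAverage_sub (f : E →ₗ[ℝ] E) hK.isBounded hf hx).comp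
    hφ.tendsto_atTop
  have hcont : Tendsto (fun m => f (orbitAverage f x (φ m)) - orbitAverage f x (φ m)) atTop
      (𝓝 (f p - p)) := ((f.continuous.tendsto p).comp hlim).sub hlim
  exact ⟨p, hpK, sub_eq_zero.1 (tendsto_nhds_unique hcont hdefect)⟩

end OrbitAverage

namespace Matrix

lemma mapsTo_mulVec_stdSimplex {R n : Type*} [Fintype n] [DecidableEq n] [Semiring R]
    [PartialOrder R] [IsOrderedRing R] {A : Matrix n n R} (hA : A ∈ colStochastic R n) :
    MapsTo (A *ᵥ ·) (stdSimplex R n) (stdSimplex R n) := fun _ hx =>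
  ⟨nonneg_mulVec_of_mem_colStochastic hA hx.1, (sum_mulVec_of_mem_colStochastic hA).trans hx.2⟩

end Matrix

/-- For an n×n exchange matrix A (nonnegative entries, each column sum 1), the
equation Ap = p has a nontrivial nonnegative solution. -/
theorem stmt10 (n : ℕ) (hn : 1 ≤ n) (A : Matrix (Fin n) (Fin n) ℝ)
    (hA : ∀ i j, 0 ≤ A i j) (hcol : ∀ j, ∑ i, A i j = 1) :
    ∃ p : Fin n → ℝ, p ≠ 0 ∧ (∀ i, 0 ≤ p i) ∧ A.mulVec p = p := by
  have hAcol : A ∈ Matrix.colStochastic ℝ (Fin n) := Matrix.mem_colStochastic_iff_sum.2 ⟨hA, hcol⟩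
  obtain ⟨p, ⟨hp_nonneg, hp_sum⟩, hp⟩ :=
    (LinearMap.toContinuousLinearMap (Matrix.toLin' A)).exists_fixedPoint_of_mapsTo
      (isCompact_stdSimplex ℝ _) (convex_stdSimplex ℝ _) ⟨_, single_mem_stdSimplex ℝ ⟨0, hn⟩⟩
      (Matrix.mapsTo_mulVec_stdSimplex hAcol)
  refine ⟨p, ?_, hp_nonneg, hp⟩
  rintro rfl
  simp at hp_sum
end

section
/- Let C be an n×n real matrix with nonnegative entries. If every row sum of C is strictly less than 1, then C is productive: I − C is invertible and every entry of (I − C)⁻¹ is nonnegative. The same conclusion holds if instead every column sum of C is strictly less than 1. -/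
attribute [local instance] Matrix.linftyOpNormedRing Matrix.linftyOpNormedSpace

private lemma pow_entry_nonneg {n : ℕ} (C : Matrix (Fin n) (Fin n) ℝ)
    (hC : ∀ i j, 0 ≤ C i j) : ∀ k i j, 0 ≤ (C ^ k) i j := by
  intro k
  induction k with
  | zero =>
    intro i j
    simp only [pow_zero]
    by_cases h : i = j <;> simp [Matrix.one_apply, h]
  | succ k ih =>
    intro i j
    rw [pow_succ, Matrix.mul_apply]
    exact Finset.sum_nonneg fun l _ => mul_nonneg (ih i l) (hC l j)

private lemma aux_row {n : ℕ} (C : Matrix (Fin n) (Fin n) ℝ) (hC : ∀ i j, 0 ≤ C i j)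
    (h : ∀ i, ∑ j, C i j < 1) : IsUnit (1 - C) ∧ ∀ i j, 0 ≤ (1 - C)⁻¹ i j := by
  haveI : CompleteSpace (Matrix (Fin n) (Fin n) ℝ) :=
    inferInstanceAs (CompleteSpace (Fin n → Fin n → ℝ))
  have hnorm : ‖C‖ < 1 := by
    have h1 : ‖C‖₊ < 1 := by
      rw [Matrix.linfty_opNNNorm_def]
      refine Finset.sup_lt_iff (by norm_num) |>.mpr fun i _ => ?_
      rw [← NNReal.coe_lt_coe]
      push_cast
      calc (∑ j, (‖C i j‖₊ : ℝ)) = ∑ j, C i j := by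
            refine Finset.sum_congr rfl fun j _ => ?_
            rw [coe_nnnorm, Real.norm_of_nonneg (hC i j)]
        _ < 1 := h i
    exact_mod_cast h1
  have hunit : IsUnit (1 - C) := isUnit_one_sub_of_norm_lt_one hnorm
  refine ⟨hunit, fun i j => ?_⟩
  have hs : HasSum (fun k : ℕ => C ^ k) (Ring.inverse (1 - C)) :=
    hasSum_geom_series_inverse C hnorm
  have hcont : Continuous (Matrix.entryLinearMap ℝ ℝ i j :
      Matrix (Fin n) (Fin n) ℝ →ₗ[ℝ] ℝ) :=
    LinearMap.continuous_of_finiteDimensional _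
  have hs' : HasSum (fun k : ℕ => (C ^ k) i j) (Ring.inverse (1 - C) i j) :=
    hs.map (Matrix.entryLinearMap ℝ ℝ i j).toAddMonoidHom hcont
  have hnn : 0 ≤ Ring.inverse (1 - C) i j :=
    hasSum_le (fun k => pow_entry_nonneg C hC k i j) hasSum_zero hs'
  rwa [Matrix.nonsing_inv_eq_ringInverse]

/-- A nonnegative consumption matrix C all of whose row sums are < 1 is productive
(I − C invertible with nonnegative inverse); likewise if all column sums are < 1. -/
theorem stmt12 (n : ℕ) (C : Matrix (Fin n) (Fin n) ℝ) (hC : ∀ i j, 0 ≤ C i j) :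
    ((∀ i, ∑ j, C i j < 1) → IsUnit (1 - C) ∧ ∀ i j, 0 ≤ (1 - C)⁻¹ i j) ∧
    ((∀ j, ∑ i, C i j < 1) → IsUnit (1 - C) ∧ ∀ i j, 0 ≤ (1 - C)⁻¹ i j) := by
  constructor
  · exact aux_row C hC
  · intro h
    obtain ⟨hu, hn⟩ := aux_row C.transpose (fun i j => hC j i) (fun i => h i)
    have ht : (1 : Matrix (Fin n) (Fin n) ℝ) - C.transpose = (1 - C).transpose := by
      rw [Matrix.transpose_sub, Matrix.transpose_one]
    rw [ht] at hu hn
    have hu' : IsUnit (1 - C) := by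
      rw [Matrix.isUnit_iff_isUnit_det] at hu ⊢
      rwa [Matrix.det_transpose] at hu
    refine ⟨hu', fun i j => ?_⟩
    have := hn j i
    rwa [← Matrix.transpose_nonsing_inv, Matrix.transpose_apply] at this
end

section
/- Let C be an n×n real matrix with nonnegative entries. Then C is productive — that is, I − C is invertible and (I − C)⁻¹ has nonnegative entries — if and only if there exists a vector x ∈ ℝⁿ with x ≥ 0 and x > Cx, i.e. every entry of x is nonnegative and every entry of x strictly exceeds the corresponding entry of Cx. -/
/-- A nonnegative consumption matrix C is productive (I − C invertible with
nonnegative inverse) iff there is a vector x ≥ 0 with x > Cx entrywise. -/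
theorem stmt13 (n : ℕ) (C : Matrix (Fin n) (Fin n) ℝ) (hC : ∀ i j, 0 ≤ C i j) :
    (IsUnit (1 - C) ∧ ∀ i j, 0 ≤ (1 - C)⁻¹ i j) ↔
      ∃ x : Fin n → ℝ, (∀ i, 0 ≤ x i) ∧ ∀ i, C.mulVec x i < x i := by
  constructor
  · rintro ⟨hu, hinv⟩
    refine ⟨(1 - C)⁻¹.mulVec 1, ?_, ?_⟩
    · intro i
      unfold Matrix.mulVec dotProduct
      exact Finset.sum_nonneg fun j _ => by simpa using hinv i j
    · intro i
      have h1 : (1 - C).mulVec ((1 - C)⁻¹.mulVec 1) = 1 := by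
        rw [Matrix.mulVec_mulVec,
          Matrix.mul_nonsing_inv _ ((Matrix.isUnit_iff_isUnit_det _).mp hu),
          Matrix.one_mulVec]
      have h2 := congrFun h1 i
      rw [Matrix.sub_mulVec, Matrix.one_mulVec] at h2
      have h3 : ((1 - C)⁻¹.mulVec 1) i - C.mulVec ((1 - C)⁻¹.mulVec 1) i = 1 := h2
      linarith
  · rintro ⟨x, hx0, hxlt⟩
    -- x is strictly positive
    have hCx0 : ∀ i, 0 ≤ C.mulVec x i := fun i => by
      unfold Matrix.mulVec dotProduct
      exact Finset.sum_nonneg fun j _ => mul_nonneg (hC i j) (hx0 j)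
    have hxpos : ∀ i, 0 < x i := fun i => lt_of_le_of_lt (hCx0 i) (hxlt i)
    rcases Nat.eq_zero_or_pos n with hn | hn
    · subst hn
      constructor
      · have : (1 - C) * 1 = 1 := by
          ext i j
          exact absurd i.2 (by omega)
        exact (Matrix.isUnit_iff_isUnit_det _).mpr
          (Matrix.isUnit_det_of_right_inverse this)
      · intro i; exact absurd i.2 (by omega)
    have hne : (Finset.univ : Finset (Fin n)).Nonempty := by
      simpa [Finset.univ_nonempty_iff] using Fin.pos_iff_nonempty.mp hn
    set c : ℝ := Finset.univ.sup' hne (fun i => C.mulVec x i / x i) with hc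
    have hc1 : c < 1 := by
      rw [hc, Finset.sup'_lt_iff]
      intro i _
      exact (div_lt_one (hxpos i)).mpr (hxlt i)
    have hc0 : 0 ≤ c := by
      obtain ⟨i, hi⟩ := hne
      refine le_trans (div_nonneg (hCx0 i) (hxpos i).le) ?_
      rw [hc]
      exact Finset.le_sup' (fun i => C.mulVec x i / x i) hi
    have hcx : ∀ i, C.mulVec x i ≤ c * x i := by
      intro i
      have hle : C.mulVec x i / x i ≤ c := by
        rw [hc]
        exact Finset.le_sup' (fun i => C.mulVec x i / x i) (Finset.mem_univ i)
      calc C.mulVec x i = (C.mulVec x i / x i) * x i :=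
            (div_mul_cancel₀ _ (hxpos i).ne').symm
        _ ≤ c * x i := mul_le_mul_of_nonneg_right hle (hxpos i).le
    -- powers of C are nonnegative
    have hpow0 : ∀ k i j, 0 ≤ (C ^ k) i j := by
      intro k
      induction k with
      | zero => intro i j; by_cases h : i = j <;> simp [Matrix.one_apply, h]
      | succ k ih =>
        intro i j
        rw [pow_succ, Matrix.mul_apply]
        exact Finset.sum_nonneg fun m _ => mul_nonneg (ih i m) (hC m j)
    -- geometric bound on powers acting on x
    have hpowx : ∀ k i, (C ^ k).mulVec x i ≤ c ^ k * x i := by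
      intro k
      induction k with
      | zero => intro i; simp [Matrix.one_mulVec]
      | succ k ih =>
        intro i
        have h1 : (C ^ (k + 1)).mulVec x = C.mulVec ((C ^ k).mulVec x) := by
          rw [Matrix.mulVec_mulVec, ← pow_succ']
        rw [h1]
        have h2 : C.mulVec ((C ^ k).mulVec x) i ≤ c ^ k * C.mulVec x i := by
          unfold Matrix.mulVec dotProduct
          rw [Finset.mul_sum]
          refine Finset.sum_le_sum fun j _ => ?_
          have := mul_le_mul_of_nonneg_left (ih j) (hC i j)
          calc C i j * (C ^ k).mulVec x j ≤ C i j * (c ^ k * x j) := this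
            _ = c ^ k * (C i j * x j) := by ring
        calc C.mulVec ((C ^ k).mulVec x) i ≤ c ^ k * C.mulVec x i := h2
          _ ≤ c ^ k * (c * x i) :=
            mul_le_mul_of_nonneg_left (hcx i) (pow_nonneg hc0 k)
          _ = c ^ (k + 1) * x i := by ring
    -- entrywise geometric bound
    have hentry : ∀ k i j, (C ^ k) i j ≤ c ^ k * (x i / x j) := by
      intro k i j
      have h1 : (C ^ k) i j * x j ≤ (C ^ k).mulVec x i := by
        unfold Matrix.mulVec dotProduct
        refine Finset.single_le_sum (fun m _ => mul_nonneg (hpow0 k i m) (hx0 m))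
          (Finset.mem_univ j)
      have h2 : (C ^ k) i j * x j ≤ c ^ k * x i := le_trans h1 (hpowx k i)
      rw [← mul_div_assoc, le_div_iff₀ (hxpos j)]
      exact h2
    -- summability of the entrywise series
    have hsum : ∀ i j, Summable (fun k => (C ^ k) i j) := by
      intro i j
      refine Summable.of_nonneg_of_le (fun k => hpow0 k i j) (fun k => hentry k i j) ?_
      exact (summable_geometric_of_lt_one hc0 hc1).mul_right _
    set S : Matrix (Fin n) (Fin n) ℝ := Matrix.of fun i j => ∑' k, (C ^ k) i j with hS
    have hS0 : ∀ i j, 0 ≤ S i j := fun i j => tsum_nonneg fun k => hpow0 k i j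
    -- (1 - C) * S = 1
    have hmul : (1 - C) * S = 1 := by
      ext i j
      rw [Matrix.sub_mul, Matrix.one_mul, Matrix.sub_apply, Matrix.mul_apply]
      have h1 : ∀ m, S m j = ∑' k, (C ^ k) m j := fun m => rfl
      have h2 : ∑ m, C i m * S m j = ∑' k, (C ^ (k + 1)) i j := by
        have h3 : ∑ m, C i m * S m j = ∑ m, ∑' k, C i m * (C ^ k) m j := by
          refine Finset.sum_congr rfl fun m _ => ?_
          rw [h1 m, tsum_mul_left]
        rw [h3, ← Summable.tsum_finsetSum (fun m _ => (hsum m j).mul_left _)]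
        refine tsum_congr fun k => ?_
        rw [pow_succ', Matrix.mul_apply]
      rw [h2]
      have h4 : ∑' k, (C ^ k) i j = (C ^ 0) i j + ∑' k, (C ^ (k + 1)) i j :=
        Summable.tsum_eq_zero_add (hsum i j)
      have h5 : S i j = ∑' k, (C ^ k) i j := rfl
      rw [h5, h4]
      simp [Matrix.one_apply]
    have hu : IsUnit (1 - C) := (Matrix.isUnit_iff_isUnit_det _).mpr
      (Matrix.isUnit_det_of_right_inverse hmul)
    refine ⟨hu, ?_⟩
    have hinv : (1 - C)⁻¹ = S := Matrix.inv_eq_right_inv hmul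
    rw [hinv]
    exact hS0
end
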